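/- arXiv:1703.08241 — 4 statements merged into one kernel-verified Lean document; each statement's English description precedes it below -/
import Mathlib

section
/- For any X, Y, Z, W in SL(2,ℂ), the following 'four-letter' trace identity holds: 2·tr(XYZW) = tr(X)tr(Y)tr(Z)tr(W) + tr(X)tr(YZW) + tr(Y)tr(XZW) + tr(Z)tr(XYW) + tr(W)tr(XYZ) − tr(XZ)tr(YW) + tr(XW)tr(YZ) + tr(XY)tr(ZW) − tr(X)tr(Y)tr(ZW) − tr(X)tr(W)tr(YZ) − tr(Y)tr(Z)tr(XW) − tr(Z)tr(W)tr(XY). -/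
theorem four_letter_trace_identity (X Y Z W : Matrix (Fin 2) (Fin 2) ℂ)
    (hX : X.det = 1) (hY : Y.det = 1) (hZ : Z.det = 1) (hW : W.det = 1) :
    2 * (X * Y * Z * W).trace =
      X.trace * Y.trace * Z.trace * W.trace
      + X.trace * (Y * Z * W).trace
      + Y.trace * (X * Z * W).trace
      + Z.trace * (X * Y * W).trace
      + W.trace * (X * Y * Z).trace
      - (X * Z).trace * (Y * W).trace
      + (X * W).trace * (Y * Z).trace
      + (X * Y).trace * (Z * W).trace
      - X.trace * Y.trace * (Z * W).trace
      - X.trace * W.trace * (Y * Z).trace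
      - Y.trace * Z.trace * (X * W).trace
      - Z.trace * W.trace * (X * Y).trace := by
  simp only [Matrix.trace_fin_two, Matrix.mul_apply, Fin.sum_univ_two]
  ring
end

section
/- For any X, Y, Z in SL(2,ℂ), setting t₁ = tr(X), t₂ = tr(Y), t₃ = tr(Z), t₁₂ = tr(XY), t₁₃ = tr(XZ), t₂₃ = tr(YZ), t₁₂₃ = tr(XYZ), one has t₁₂₃² − P·t₁₂₃ + Q = 0, where P = t₁t₂₃ + t₂t₁₃ + t₃t₁₂ − t₁t₂t₃ and Q = t₁² + t₂² + t₃² + t₁₂² + t₂₃² + t₁₃² − t₁t₂t₁₂ − t₂t₃t₂₃ − t₁t₃t₁₃ + t₁₂t₂₃t₁₃ − 4. -/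
theorem rank_three_trace_relation (X Y Z : Matrix (Fin 2) (Fin 2) ℂ)
    (hX : X.det = 1) (hY : Y.det = 1) (hZ : Z.det = 1) :
    let t1 := X.trace; let t2 := Y.trace; let t3 := Z.trace
    let t12 := (X * Y).trace; let t13 := (X * Z).trace; let t23 := (Y * Z).trace
    let t123 := (X * Y * Z).trace
    let P := t1 * t23 + t2 * t13 + t3 * t12 - t1 * t2 * t3
    let Q := t1 ^ 2 + t2 ^ 2 + t3 ^ 2 + t12 ^ 2 + t23 ^ 2 + t13 ^ 2
      - t1 * t2 * t12 - t2 * t3 * t23 - t1 * t3 * t13 + t12 * t23 * t13 - 4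
    t123 ^ 2 - P * t123 + Q = 0 := by
  rw [Matrix.det_fin_two] at hX hY hZ
  simp only [Matrix.trace, Matrix.diag, Matrix.mul_apply, Fin.sum_univ_two, Finset.sum_apply]
  linear_combination ((2) + (-1*Z 1 1 ^ 2) + (-1*Z 0 0 ^ 2) + (-1*Y 1 1 ^ 2) + (Y 1 1 ^ 2*Z 0 0*Z 1 1) + (-1*Y 1 0*Y 1 1*Z 0 1*Z 1 1) + (Y 1 0*Y 1 1*Z 0 0*Z 0 1) + (-1*Y 1 0 ^ 2*Z 0 1 ^ 2) + (-1*Y 0 1*Y 1 1*Z 1 0*Z 1 1) + (Y 0 1*Y 1 1*Z 0 0*Z 1 0) + (-1*Y 0 1 ^ 2*Z 1 0 ^ 2) + (Y 0 0*Y 1 1*Z 1 1 ^ 2) + (-2*Y 0 0*Y 1 1*Z 0 0*Z 1 1) + (Y 0 0*Y 1 1*Z 0 0 ^ 2) + (Y 0 0*Y 1 0*Z 0 1*Z 1 1) + (-1*Y 0 0*Y 1 0*Z 0 0*Z 0 1) + (Y 0 0*Y 0 1*Z 1 0*Z 1 1) + (-1*Y 0 0*Y 0 1*Z 0 0*Z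 1 0) + (-1*Y 0 0 ^ 2) + (Y 0 0 ^ 2*Z 0 0*Z 1 1)) * hX + ((2) + (-2*Z 0 0*Z 1 1) + (-1*X 1 1 ^ 2) + (X 1 1 ^ 2*Z 0 0*Z 1 1) + (-1*X 1 0*X 1 1*Z 0 1*Z 1 1) + (X 1 0*X 1 1*Z 0 0*Z 0 1) + (-1*X 1 0 ^ 2*Z 0 1 ^ 2) + (-1*X 0 1*X 1 1*Z 1 0*Z 1 1) + (X 0 1*X 1 1*Z 0 0*Z 1 0) + (X 0 1*X 1 0*Z 1 1 ^ 2) + (-2*X 0 1*X 1 0*Z 0 0*Z 1 1) + (X 0 1*X 1 0*Z 0 0 ^ 2) + (-1*X 0 1 ^ 2*Z 1 0 ^ 2) + (X 0 0*X 1 0*Z 0 1*Z 1 1) + (-1*X 0 0*X 1 0*Z 0 0*Z 0 1) + (X 0 0*X 0 1*Z 1 0*Z 1 1) + (-1*X 0 0*X 0 1*Z 0 0*Z 1 0) + (-1*X 0 0 ^ 2) + (X 0 0 ^ 2*Z 0 0*Z 1 1)) * hY + ((-2*Y 0 1*Y 1 0) + (X 1 1 ^ 2*Y 0 1*Y 1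 0) + (-1*X 1 0*X 1 1*Y 0 1*Y 1 1) + (X 1 0*X 1 1*Y 0 0*Y 0 1) + (-1*X 1 0 ^ 2*Y 0 1 ^ 2) + (-1*X 0 1*X 1 1*Y 1 0*Y 1 1) + (X 0 1*X 1 1*Y 0 0*Y 1 0) + (-2*X 0 1*X 1 0) + (X 0 1*X 1 0*Y 1 1 ^ 2) + (-2*X 0 1*X 1 0*Y 0 1*Y 1 0) + (X 0 1*X 1 0*Y 0 0 ^ 2) + (-1*X 0 1 ^ 2*Y 1 0 ^ 2) + (X 0 0*X 1 0*Y 0 1*Y 1 1) + (-1*X 0 0*X 1 0*Y 0 0*Y 0 1) + (X 0 0*X 0 1*Y 1 0*Y 1 1) + (-1*X 0 0*X 0 1*Y 0 0*Y 1 0) + (X 0 0 ^ 2*Y 0 1*Y 1 0)) * hZ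
end

section
/- The polynomials tr(X), tr(Y), tr(XY) on SL(2,ℂ) × SL(2,ℂ) are algebraically independent over ℂ: there is no nonzero polynomial p ∈ ℂ[a,b,c] such that p(tr(X), tr(Y), tr(XY)) = 0 for all X, Y ∈ SL(2,ℂ). -/
open Matrix

lemma exists_XY (a b c : ℂ) :
    ∃ X Y : Matrix (Fin 2) (Fin 2) ℂ, X.det = 1 ∧ Y.det = 1 ∧
      X.trace = a ∧ Y.trace = b ∧ (X * Y).trace = c := by
  obtain ⟨t, ht⟩ : ∃ t : ℂ, t ^ 2 - c * t + 1 = 0 := by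
    have h : 0 < (Polynomial.X ^ 2 - Polynomial.C c * Polynomial.X + 1 : Polynomial ℂ).degree := by
      have : (Polynomial.X ^ 2 - Polynomial.C c * Polynomial.X + 1 : Polynomial ℂ).degree = 2 := by
        compute_degree!
      rw [this]; norm_num
    obtain ⟨t, ht⟩ := Complex.exists_root h
    exact ⟨t, by have := ht; simp [Polynomial.IsRoot] at this; exact this⟩
  have ht0 : t ≠ 0 := by
    rintro rfl; simp at ht
  refine ⟨!![a, -1; 1, 0], !![0, t; -t⁻¹, b], ?_, ?_, ?_, ?_, ?_⟩
  · simp [Matrix.det_fin_two]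
  · simp [Matrix.det_fin_two, ht0]
  · simp [Matrix.trace_fin_two]
  · simp [Matrix.trace_fin_two]
  · have hc : t⁻¹ + t = c := by
      field_simp
      linear_combination ht
    simp [Matrix.trace_fin_two, Matrix.mul_apply, Fin.sum_univ_two]
    linear_combination hc

theorem trace_coords_alg_indep :
    ¬ ∃ p : MvPolynomial (Fin 3) ℂ, p ≠ 0 ∧
      ∀ X Y : Matrix (Fin 2) (Fin 2) ℂ, X.det = 1 → Y.det = 1 →
        MvPolynomial.eval (![X.trace, Y.trace, (X * Y).trace]) p = 0 := by
  rintro ⟨p, hp, h⟩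
  apply hp
  apply MvPolynomial.funext
  intro v
  obtain ⟨X, Y, hX, hY, ha, hb, hc⟩ := exists_XY (v 0) (v 1) (v 2)
  have hv : ![X.trace, Y.trace, (X * Y).trace] = v := by
    funext i; fin_cases i <;> simp [ha, hb, hc]
  rw [← hv]
  simpa using h X Y hX hY
end

section
/- For traceless 2×2 complex matrices Z₁, Z₂, Z₃ (tr(Zᵢ) = 0), the identity tr(s₃(Z₁,Z₂,Z₃))² + 18·det(M) = 0 holds, where s₃(Z₁,Z₂,Z₃) = Σ_{σ∈S₃} sign(σ)·Z_{σ(1)}Z_{σ(2)}Z_{σ(3)} is the standard polynomial and M is the 3×3 matrix with entries M_{ij} = tr(Zᵢ Zⱼ). -/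
set_option maxHeartbeats 4000000
set_option maxRecDepth 10000

noncomputable def s3 (A : Fin 3 → Matrix (Fin 2) (Fin 2) ℂ) : Matrix (Fin 2) (Fin 2) ℂ :=
  ∑ σ : Equiv.Perm (Fin 3), ((Equiv.Perm.sign σ : ℤ) : ℂ) • (A (σ 0) * A (σ 1) * A (σ 2))

theorem s3_eq (A : Fin 3 → Matrix (Fin 2) (Fin 2) ℂ) :
    s3 A = A 0 * A 1 * A 2 - A 0 * A 2 * A 1 - A 1 * A 0 * A 2
      + A 1 * A 2 * A 0 + A 2 * A 0 * A 1 - A 2 * A 1 * A 0 := by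
  have h : (Finset.univ : Finset (Equiv.Perm (Fin 3))) =
      {Equiv.refl _, Equiv.swap 0 1, Equiv.swap 0 2, Equiv.swap 1 2,
       finRotate 3, (finRotate 3)^2} := by decide
  rw [s3, h, Finset.sum_insert (by decide), Finset.sum_insert (by decide),
    Finset.sum_insert (by decide), Finset.sum_insert (by decide),
    Finset.sum_insert (by decide), Finset.sum_singleton]
  rw [show (Equiv.Perm.sign (Equiv.refl (Fin 3)) : ℤ) = 1 from by decide,
    show (Equiv.Perm.sign (Equiv.swap (0:Fin 3) 1) : ℤ) = -1 from by decide,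
    show (Equiv.Perm.sign (Equiv.swap (0:Fin 3) 2) : ℤ) = -1 from by decide,
    show (Equiv.Perm.sign (Equiv.swap (1:Fin 3) 2) : ℤ) = -1 from by decide,
    show (Equiv.Perm.sign (finRotate 3) : ℤ) = 1 from by decide,
    show (Equiv.Perm.sign ((finRotate 3)^2) : ℤ) = 1 from by decide,
    show Equiv.refl (Fin 3) 0 = 0 from rfl, show Equiv.refl (Fin 3) 1 = 1 from rfl,
    show Equiv.refl (Fin 3) 2 = 2 from rfl,
    show Equiv.swap (0:Fin 3) 1 0 = 1 from by decide,
    show Equiv.swap (0:Fin 3) 1 1 = 0 from by decide,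
    show Equiv.swap (0:Fin 3) 1 2 = 2 from by decide,
    show Equiv.swap (0:Fin 3) 2 0 = 2 from by decide,
    show Equiv.swap (0:Fin 3) 2 1 = 1 from by decide,
    show Equiv.swap (0:Fin 3) 2 2 = 0 from by decide,
    show Equiv.swap (1:Fin 3) 2 0 = 0 from by decide,
    show Equiv.swap (1:Fin 3) 2 1 = 2 from by decide,
    show Equiv.swap (1:Fin 3) 2 2 = 1 from by decide,
    show finRotate 3 0 = 1 from by decide,
    show finRotate 3 1 = 2 from by decide,
    show finRotate 3 2 = 0 from by decide,
    show ((finRotate 3)^2) 0 = 2 from by decide,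
    show ((finRotate 3)^2) 1 = 0 from by decide,
    show ((finRotate 3)^2) 2 = 1 from by decide]
  push_cast
  module

theorem type_one_relation (Z : Fin 3 → Matrix (Fin 2) (Fin 2) ℂ)
    (hZ : ∀ i, (Z i).trace = 0) :
    (s3 Z).trace ^ 2 + 18 * (Matrix.of fun i j : Fin 3 => (Z i * Z j).trace).det = 0 := by
  have hd : ∀ i, Z i 1 1 = -(Z i 0 0) := fun i => by
    have h := hZ i
    rw [Matrix.trace_fin_two] at h
    linear_combination h
  obtain ⟨a, b, c, hZ'⟩ : ∃ a b c : Fin 3 → ℂ, ∀ i, Z i = !![a i, b i; c i, -(a i)] :=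
    ⟨fun i => Z i 0 0, fun i => Z i 0 1, fun i => Z i 1 0, fun i => by
      ext j k; fin_cases j <;> fin_cases k <;>
        simp [hd]⟩
  rw [s3_eq]
  simp only [hZ', Matrix.mul_fin_two, Matrix.det_fin_three, Matrix.of_apply,
    Matrix.trace_fin_two_of, Matrix.trace_sub, Matrix.trace_add]
  ring
end
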